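/- Fix substrings S₁,…,S_k with no S_i contained in another. For each i, the set of compositions of the form (composition avoiding all S_j's) concatenated with S_i equals the disjoint union over j of the sets {X·Y : X quasi-avoids S_j, Y is a possible ij-tail of X}, where Y has length at most ℓ(S_i) − 1 and X·Y ends with S_i. -/
import Mathlib

/-- The prohibited string `T` occurs in `s` at position `p`. -/
def occursAt (T s : List ℕ) (p : ℕ) : Prop :=
  ∃ u v : List ℕ, s = u ++ T ++ v ∧ u.length = p

/-- `s` quasi-avoids `S j` (with respect to the family `S`): it ends with `S j`, and the
only occurrence of any prohibited string in `s` is this terminal occurrence of `S j`. -/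
def QuasiAvoids {k : ℕ} (S : Fin k → List ℕ) (j : Fin k) (s : List ℕ) : Prop :=
  S j <:+ s ∧ ∀ j' p, occursAt (S j') s p → S j' = S j ∧ p + (S j).length = s.length

lemma occ_append_right {T x w : List ℕ} {p : ℕ} (h : occursAt T x p) :
    occursAt T (x ++ w) p := by
  obtain ⟨u, v, rfl, hp⟩ := h
  exact ⟨u, v ++ w, by simp, hp⟩

lemma occ_length_le {T s : List ℕ} {p : ℕ} (h : occursAt T s p) :
    p + T.length ≤ s.length := by
  obtain ⟨u, v, rfl, hp⟩ := h
  simp [← hp]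

lemma occ_take {T s : List ℕ} {p m : ℕ} (h : occursAt T s p) (hm : p + T.length ≤ m) :
    occursAt T (s.take m) p := by
  obtain ⟨u, v, rfl, rfl⟩ := h
  refine ⟨u, v.take (m - u.length - T.length), ?_, rfl⟩
  rw [List.append_assoc, List.take_append,
    List.take_of_length_le (by omega), List.take_append,
    List.take_of_length_le (by omega), List.append_assoc]

lemma occ_of_suffix {T s u : List ℕ} (h : u ++ T = s) : occursAt T s u.length :=
  ⟨u, [], by simp [← h], rfl⟩

lemma suffix_of_occ_end {T s : List ℕ} {p : ℕ} (h : occursAt T s p)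
    (he : p + T.length = s.length) : T <:+ s := by
  obtain ⟨u, v, rfl, rfl⟩ := h
  simp only [List.length_append] at he
  have hv : v = [] := List.length_eq_zero_iff.mp (by omega)
  subst hv
  exact ⟨u, by simp⟩

lemma infix_of_occ {T s : List ℕ} {p : ℕ} (h : occursAt T s p) : T <:+: s := by
  obtain ⟨u, v, rfl, -⟩ := h
  exact ⟨u, v, rfl⟩

lemma same_end {k : ℕ} (S : Fin k → List ℕ)
    (hincl : ∀ j j', j ≠ j' → ¬ S j <:+: S j')
    {s : List ℕ} {a b : Fin k} {p q : ℕ}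
    (ha : occursAt (S a) s p) (hb : occursAt (S b) s q)
    (he : p + (S a).length = q + (S b).length) :
    S a = S b ∧ p = q := by
  have hle : p + (S a).length ≤ s.length := occ_length_le ha
  have h1 : S a <:+ s.take (p + (S a).length) :=
    suffix_of_occ_end (occ_take ha le_rfl) (by rw [List.length_take]; omega)
  have h2 : S b <:+ s.take (p + (S a).length) :=
    suffix_of_occ_end (occ_take hb (by omega)) (by rw [List.length_take]; omega)
  have hab : S a = S b := by
    by_contra hne'
    have hANE : a ≠ b := fun h => hne' (by rw [h])
    rcases List.suffix_or_suffix_of_suffix h1 h2 with h | h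
    · exact hincl a b hANE h.isInfix
    · exact hincl b a hANE.symm h.isInfix
  refine ⟨hab, ?_⟩
  rw [hab] at he
  omega

/-- Fix prohibited substrings `S₁, …, S_k` over the positive integers, none a substring
of another.  For each `i`, the set of compositions of the form
(composition avoiding all the `S j`'s) followed by `S i` is the disjoint union over `j`
of the sets of compositions `X ++ Y` where `X` quasi-avoids `S j` and `Y` is a possible
`ij`-tail for `X`, i.e. `ℓ(Y) ≤ ℓ(S i) - 1` and `X ++ Y` ends with `S i`. -/
theorem avoid_append_eq_union_quasi
    (k : ℕ) (S : Fin k → List ℕ)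
    (hne : ∀ j, S j ≠ [])
    (hpos : ∀ j, ∀ x ∈ S j, 0 < x)
    (hincl : ∀ j j', j ≠ j' → ¬ S j <:+: S j')
    (i : Fin k)
    (T : Fin k → Set (List ℕ))
    (hT : ∀ j, T j = {l | ∃ X Y : List ℕ, (∀ p ∈ X, 0 < p) ∧ QuasiAvoids S j X ∧
      (∀ p ∈ Y, 0 < p) ∧ Y.length ≤ (S i).length - 1 ∧ S i <:+ (X ++ Y) ∧ l = X ++ Y}) :
    {l | ∃ X : List ℕ, (∀ p ∈ X, 0 < p) ∧ (∀ j, ¬ S j <:+: X) ∧ l = X ++ S i} =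
        (⋃ j, T j) ∧
      (∀ j j', j ≠ j' → Disjoint (T j) (T j')) := by
  classical
  have hSi1 : 1 ≤ (S i).length := List.length_pos_iff.mpr (hne i)
  constructor
  · ext l
    simp only [Set.mem_setOf_eq, Set.mem_iUnion]
    constructor
    · rintro ⟨X, hXpos, hXav, rfl⟩
      have hlpos : ∀ p ∈ X ++ S i, 0 < p := by
        intro p hp
        rcases List.mem_append.mp hp with h | h
        · exact hXpos p h
        · exact hpos i p h
      have hE : ∃ e, ∃ (j : Fin k) (p : ℕ),
          occursAt (S j) (X ++ S i) p ∧ p + (S j).length = e :=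
        ⟨X.length + (S i).length, i, X.length, occ_of_suffix rfl, rfl⟩
      obtain ⟨j, p, hocc, hend⟩ := Nat.find_spec hE
      set e := Nat.find hE with hedef
      have hlen_l : (X ++ S i).length = X.length + (S i).length := by simp
      have he_le : e ≤ (X ++ S i).length := hend ▸ occ_length_le hocc
      have hgt : ∀ (j' : Fin k) (p' : ℕ), occursAt (S j') (X ++ S i) p' →
          X.length < p' + (S j').length := by
        intro j' p' h'
        by_contra hle
        push_neg at hle
        have hX : occursAt (S j') X p' := by
          have := occ_take h' hle
          rwa [List.take_left] at this
        exact hXav j' (infix_of_occ hX)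
      have heX : X.length < e := hend ▸ hgt j p hocc
      refine ⟨j, ?_⟩
      rw [hT j]
      have hsplit : (X ++ S i).take e ++ (X ++ S i).drop e = X ++ S i :=
        List.take_append_drop e (X ++ S i)
      refine ⟨(X ++ S i).take e, (X ++ S i).drop e, ?_, ⟨?_, ?_⟩, ?_, ?_, ?_, hsplit.symm⟩
      · intro q hq; exact hlpos q (List.take_subset _ _ hq)
      · exact suffix_of_occ_end (occ_take hocc (by omega))
          (by rw [List.length_take]; omega)
      · intro j'' p'' h''
        have h''l : occursAt (S j'') (X ++ S i) p'' := by
          have := occ_append_right (w := (X ++ S i).drop e) h''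
          rwa [hsplit] at this
        have hub : p'' + (S j'').length ≤ e := by
          have := occ_length_le h''
          rwa [List.length_take, min_eq_left he_le] at this
        have hlb : e ≤ p'' + (S j'').length := Nat.find_min' hE ⟨j'', p'', h''l, rfl⟩
        have heq : p'' + (S j'').length = p + (S j).length := by omega
        obtain ⟨hSeq, hpeq⟩ := same_end S hincl h''l hocc heq
        refine ⟨hSeq, ?_⟩
        rw [List.length_take, min_eq_left he_le, ← hSeq]
        omega
      · intro q hq; exact hlpos q (List.drop_subset _ _ hq)
      · rw [List.length_drop]
        omega
      · rw [hsplit]; exact ⟨X, rfl⟩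
    · rintro ⟨j, hlj⟩
      rw [hT j] at hlj
      obtain ⟨X, Y, hXpos, ⟨hsufj, hQA⟩, hYpos, hYlen, hsufi, rfl⟩ := hlj
      obtain ⟨u, hu⟩ := hsufi
      have hmemXY : ∀ p ∈ X ++ Y, 0 < p := by
        intro p hp
        rcases List.mem_append.mp hp with h | h
        · exact hXpos p h
        · exact hYpos p h
      refine ⟨u, ?_, ?_, hu.symm⟩
      · intro p hp
        exact hmemXY p (hu ▸ List.mem_append_left (S i) hp)
      · intro a ha
        obtain ⟨s, t, hst⟩ := ha
        have hXlen : (S j).length ≤ X.length := hsufj.length_le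
        have hSj1 : 1 ≤ (S j).length := List.length_pos_iff.mpr (hne j)
        have hlenu : u.length + (S i).length = X.length + Y.length := by
          have := congrArg List.length hu
          simpa using this
        have hendu : s.length + (S a).length ≤ u.length := by
          have := congrArg List.length hst
          simp at this
          omega
        have hoccl : occursAt (S a) (X ++ Y) s.length := by
          refine ⟨s, t ++ S i, ?_, rfl⟩
          rw [← hu, ← hst]
          simp
        have hoccX : occursAt (S a) X s.length := by
          have := occ_take hoccl (m := X.length) (by omega)
          rwa [List.take_left] at this
        obtain ⟨hSeq, hpe⟩ := hQA a s.length hoccX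
        have hla : (S a).length = (S j).length := by rw [hSeq]
        omega
  · intro j j' hjj'
    rw [Set.disjoint_left]
    intro l hl hl'
    rw [hT j] at hl
    rw [hT j'] at hl'
    obtain ⟨X, Y, -, ⟨hsj, hq⟩, -, -, -, rfl⟩ := hl
    obtain ⟨X', Y', -, ⟨hsj', hq'⟩, -, -, -, heq⟩ := hl'
    have key : ∀ (a b : Fin k) (A B C D : List ℕ), S a <:+ A →
        (∀ j'' p, occursAt (S j'') B p → S j'' = S b ∧ p + (S b).length = B.length) →
        A ++ C = B ++ D → A.length ≤ B.length → S a = S b := by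
      intro a b A B C D hsA hqB habcd hab
      have hpre : A <+: B :=
        List.prefix_of_prefix_length_le ⟨C, rfl⟩ ⟨D, habcd.symm⟩ hab
      obtain ⟨w, hw⟩ := hpre
      obtain ⟨v, hv⟩ := hsA
      have hocc : occursAt (S a) B v.length := ⟨v, w, by rw [← hw, ← hv], rfl⟩
      exact (hqB a v.length hocc).1
    rcases le_total X.length X'.length with h | h
    · have hS : S j = S j' := key j j' X X' Y Y' hsj hq' heq h
      exact hincl j j' hjj' (hS ▸ List.infix_rfl)
    · have hS : S j' = S j := key j' j X' X Y' Y hsj' hq heq.symm h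
      exact hincl j' j (Ne.symm hjj') (hS ▸ List.infix_rfl)
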